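/- arXiv:2204.13830 — 3 statements merged into one kernel-verified Lean document; each statement's English description precedes it below -/
import Mathlib

section
/- Let n ≥ 2, 0 < η < π/4, and ξ₁, …, ξ_{n−1} ∈ Σ̃_η (each nonzero complex in the double sector). Set A := sqrt(Σ_{j=1}^{n−1} ξ_j²) (the principal square root) and Ã := sqrt(Σ_{j=1}^{n−1} |ξ_j|²). Then there exists a constant c > 0 depending only on η and n such that c·Ã ≤ Re A ≤ |A| ≤ Ã. -/
open Real

private lemma re_sq_ge {η : ℝ} (hη0 : 0 < η) (hη : η < π/4) {ξ : ℂ} (hξ : ξ ≠ 0)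
    (harg : |ξ.arg| < η ∨ π - η < |ξ.arg|) :
    Real.cos (2*η) * ‖ξ‖^2 ≤ (ξ^2).re := by
  have hπ := Real.pi_pos
  have habs : |ξ.arg| ≤ π := Complex.abs_arg_le_pi ξ
  have hcosarg : Real.cos ξ.arg = ξ.re / ‖ξ‖ := Complex.cos_arg hξ
  have habs0 : 0 < ‖ξ‖ := norm_pos_iff.mpr hξ
  have hre : ξ.re = ‖ξ‖ * Real.cos ξ.arg := by
    rw [hcosarg]; field_simp
  have hcos2 : Real.cos η ^ 2 ≤ Real.cos ξ.arg ^ 2 := by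
    rw [← Real.cos_abs ξ.arg]
    rcases harg with h | h
    · have h1 : Real.cos η ≤ Real.cos |ξ.arg| :=
        Real.cos_le_cos_of_nonneg_of_le_pi (abs_nonneg _) (by linarith) h.le
      have h2 : 0 < Real.cos η := Real.cos_pos_of_mem_Ioo ⟨by linarith, by linarith⟩
      nlinarith
    · have h1 : Real.cos |ξ.arg| ≤ Real.cos (π - η) :=
        Real.cos_le_cos_of_nonneg_of_le_pi (by linarith) habs h.le
      rw [Real.cos_pi_sub] at h1
      have h2 : 0 < Real.cos η := Real.cos_pos_of_mem_Ioo ⟨by linarith, by linarith⟩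
      nlinarith
  have hre2 : ξ.re^2 = ‖ξ‖ ^ 2 * Real.cos ξ.arg ^ 2 := by rw [hre]; ring
  have habs2 : ‖ξ‖ ^ 2 = ξ.re^2 + ξ.im^2 := by
    rw [Complex.sq_norm, Complex.normSq_apply]; ring
  have hresq : (ξ^2).re = ξ.re^2 - ξ.im^2 := by
    simp [pow_two, Complex.mul_re]
  have hc2 : Real.cos (2*η) = 2 * Real.cos η ^ 2 - 1 := Real.cos_two_mul η
  have hnn : ‖ξ‖ = ‖ξ‖ := rfl
  have h4 : Real.cos η ^ 2 * ‖ξ‖ ^ 2 ≤ Real.cos ξ.arg ^ 2 * ‖ξ‖ ^ 2 :=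
    mul_le_mul_of_nonneg_right hcos2 (sq_nonneg _)
  rw [hnn]
  nlinarith [h4, hre2, habs2, hc2, hresq, sq_nonneg (‖ξ‖)]

theorem stmt1 (n : ℕ) (hn : 2 ≤ n) (η : ℝ) (hη0 : 0 < η) (hη : η < π/4) :
    ∃ c > 0, ∀ ξ : Fin (n-1) → ℂ,
      (∀ j, ξ j ≠ 0 ∧ (|(ξ j).arg| < η ∨ π - η < |(ξ j).arg|)) →
      let A : ℂ := (∑ j, (ξ j)^2) ^ (1/2 : ℂ)
      let At : ℝ := Real.sqrt (∑ j, ‖ξ j‖^2)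
      c * At ≤ A.re ∧ A.re ≤ ‖A‖ ∧ ‖A‖ ≤ At := by
  have hπ := Real.pi_pos
  have hcos2pos : 0 < Real.cos (2*η) :=
    Real.cos_pos_of_mem_Ioo ⟨by linarith, by linarith⟩
  refine ⟨Real.sqrt (Real.cos (2*η)), Real.sqrt_pos.mpr hcos2pos, ?_⟩
  intro ξ hξ
  intro A At
  have hne : Nonempty (Fin (n-1)) := ⟨⟨0, by omega⟩⟩
  set S : ℂ := ∑ j, (ξ j)^2 with hS
  set T : ℝ := ∑ j, ‖ξ j‖^2 with hT
  have hTpos : 0 < T := by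
    apply Finset.sum_pos
    · intro j _
      exact pow_pos (norm_pos_iff.mpr (hξ j).1) 2
    · exact Finset.univ_nonempty
  have hReS : Real.cos (2*η) * T ≤ S.re := by
    rw [hS, Complex.re_sum, hT, Finset.mul_sum]
    exact Finset.sum_le_sum fun j _ => re_sq_ge hη0 hη (hξ j).1 (hξ j).2
  have hReSpos : 0 < S.re := lt_of_lt_of_le (by positivity) hReS
  have habsS : ‖S‖ ≤ T := by
    calc ‖S‖ ≤ ∑ j, ‖(ξ j)^2‖ := norm_sum_le _ _
    _ = T := by simp [hT, norm_pow]
  have hreabs : S.re ≤ ‖S‖ := Complex.re_le_norm S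
  have hA2 : A = S ^ (2⁻¹ : ℂ) := by norm_num [A, hS]
  have hAre : A.re = Real.sqrt ((‖S‖ + S.re) / 2) := by
    rw [hA2, Complex.cpow_inv_two_re]
  have hSne : S ≠ 0 := by
    intro h; rw [h] at hReSpos; simp at hReSpos
  have hAbsA : ‖A‖ = Real.sqrt ‖S‖ := by
    rw [hA2]
    rw [Complex.norm_cpow_of_ne_zero hSne]
    simp [Real.sqrt_eq_rpow]
  refine ⟨?_, ?_, ?_⟩
  · rw [hAre, ← Real.sqrt_mul hcos2pos.le]
    apply Real.sqrt_le_sqrt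
    have : ‖S‖ = ‖S‖ := rfl
    nlinarith
  · rw [hAbsA, hAre]
    apply Real.sqrt_le_sqrt
    have : ‖S‖ = ‖S‖ := rfl
    linarith
  · rw [hAbsA]
    exact Real.sqrt_le_sqrt habsS
end

section
/- Let 0 < ε < π/2, 0 < η < min{π/4, ε/2}, ρ, μ > 0. For λ ∈ Σ_ε := {z ∈ ℂ \ {0} : |arg z| < π − ε} and ξ₁,…,ξ_{n−1} ∈ Σ̃_η, set A = sqrt(Σ ξ_j²), Ã = sqrt(Σ|ξ_j|²), B = sqrt(ρ μ^{−1} λ + A²) (principal square root). Then there exist constants c, C > 0 depending only on ε, η, ρ, μ, n such that c(|λ|^{1/2} + Ã) ≤ Re B ≤ |B| ≤ C(|λ|^{1/2} + Ã). -/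
open Real

set_option maxHeartbeats 1000000


lemma cpow_half_sq (w : ℂ) : (w ^ (1/2:ℂ))^2 = w := by
  rcases eq_or_ne w 0 with h | h
  · rw [h, Complex.zero_cpow (by norm_num)]; ring
  · have := Complex.cpow_nat_inv_pow w (n := 2) (by norm_num)
    norm_num at this ⊢
    exact this

lemma cpow_half_re_nonneg (w : ℂ) : 0 ≤ (w ^ (1/2:ℂ)).re := by
  rcases eq_or_ne w 0 with h | h
  · rw [h, Complex.zero_cpow (by norm_num)]; simp
  · rw [Complex.cpow_def_of_ne_zero h, Complex.exp_re]
    apply mul_nonneg (Real.exp_nonneg _)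
    apply Real.cos_nonneg_of_mem_Icc
    have h1 : (Complex.log w * (1/2)).im = w.arg * (1/2) := by
      simp [Complex.mul_im, Complex.log_im]
    rw [h1]
    constructor
    · nlinarith [Complex.neg_pi_lt_arg w, Real.pi_pos]
    · nlinarith [Complex.arg_le_pi w, Real.pi_pos]


lemma sq_sector (η : ℝ) (hη0 : 0 < η) (hη2 : 2*η < π/2) (z : ℂ) (hz : z ≠ 0)
    (h : |z.arg| < η ∨ π - η < |z.arg|) :
    Real.cos (2*η) * ‖z‖^2 ≤ (z^2).re ∧ |(z^2).im| ≤ Real.sin (2*η) * ‖z‖^2 := by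
  set θ := z.arg with hθ
  have hre : z.re = ‖z‖ * Real.cos θ := by
    rw [← Complex.norm_mul_cos_arg z]
  have him : z.im = ‖z‖ * Real.sin θ := by
    rw [← Complex.norm_mul_sin_arg z]
  have hre2 : (z^2).re = ‖z‖^2 * Real.cos (2*θ) := by
    rw [sq, Complex.mul_re, hre, him, Real.cos_two_mul]
    nlinarith [Real.sin_sq_add_cos_sq θ]
  have him2 : (z^2).im = ‖z‖^2 * Real.sin (2*θ) := by
    rw [sq, Complex.mul_im, hre, him, Real.sin_two_mul]
    ring
  have hpi := Complex.abs_arg_le_pi z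
  have hr2 : (0:ℝ) ≤ ‖z‖^2 := by positivity
  -- find u ∈ [0, 2η] with cos(2θ) = cos u, |sin(2θ)| = sin u
  have key : ∃ u, 0 ≤ u ∧ u ≤ 2*η ∧ Real.cos (2*θ) = Real.cos u ∧
      |Real.sin (2*θ)| = Real.sin u := by
    have hc : Real.cos (2*θ) = Real.cos (2*|θ|) := by
      rcases abs_cases θ with ⟨h1, _⟩ | ⟨h1, _⟩
      · rw [h1]
      · rw [h1]; rw [show 2 * -θ = -(2*θ) by ring, Real.cos_neg]
    have hs : |Real.sin (2*θ)| = |Real.sin (2*|θ|)| := by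
      rcases abs_cases θ with ⟨h1, _⟩ | ⟨h1, _⟩
      · rw [h1]
      · rw [h1]; rw [show 2 * -θ = -(2*θ) by ring, Real.sin_neg, abs_neg]
    rcases h with h | h
    · refine ⟨2*|θ|, by positivity, by linarith, hc, ?_⟩
      rw [hs, abs_of_nonneg]
      apply Real.sin_nonneg_of_nonneg_of_le_pi (by positivity)
      nlinarith [Real.pi_pos]
    · refine ⟨2*π - 2*|θ|, by linarith, by linarith, ?_, ?_⟩
      · rw [hc, ← Real.cos_two_pi_sub (2*π - 2*|θ|)]
        ring_nf
      · have heq : Real.sin (2*|θ|) = -Real.sin (2*π - 2*|θ|) := by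
          rw [← Real.sin_two_pi_sub (2*π - 2*|θ|)]; ring_nf
        rw [hs, heq, abs_neg, abs_of_nonneg]
        apply Real.sin_nonneg_of_nonneg_of_le_pi (by linarith)
        nlinarith [Real.pi_pos]
  obtain ⟨u, hu0, hu1, hcu, hsu⟩ := key
  constructor
  · rw [hre2, hcu]
    have : Real.cos (2*η) ≤ Real.cos u :=
      Real.cos_le_cos_of_nonneg_of_le_pi hu0 (by linarith) hu1
    nlinarith
  · rw [him2, abs_mul, abs_of_nonneg hr2, hsu]
    have : Real.sin u ≤ Real.sin (2*η) := by
      apply (Real.strictMonoOn_sin.monotoneOn) _ _ hu1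
      · constructor <;> [linarith [Real.pi_pos]; linarith]
      · constructor <;> [linarith [Real.pi_pos]; linarith]
    nlinarith


lemma lam_sector (ε : ℝ) (hε : 0 < ε) (hε2 : ε < π/2) (z : ℂ) (hz : z ≠ 0)
    (h : |z.arg| < π - ε) (hre : z.re < 0) :
    Real.tan ε * |z.re| ≤ |z.im| ∧ Real.sin ε * ‖z‖ ≤ |z.im| := by
  set θ := z.arg with hθ
  have hr : 0 < ‖z‖ := norm_pos_iff.mpr hz
  have hre' : z.re = ‖z‖ * Real.cos θ := by
    rw [← Complex.norm_mul_cos_arg z]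
  have him : z.im = ‖z‖ * Real.sin θ := by
    rw [← Complex.norm_mul_sin_arg z]
  have hpi := Complex.abs_arg_le_pi z
  have hcos : Real.cos θ < 0 := by nlinarith
  have hsin_abs : |Real.sin θ| = Real.sin |θ| := by
    rcases le_or_gt 0 θ with h1 | h1
    · rw [abs_of_nonneg h1, abs_of_nonneg]
      apply Real.sin_nonneg_of_nonneg_of_le_pi h1
      rw [abs_of_nonneg h1] at hpi; exact hpi
    · rw [abs_of_neg h1, Real.sin_neg, abs_of_nonpos]
      apply Real.sin_nonpos_of_nonpos_of_neg_pi_le h1.le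
      rw [abs_of_neg h1] at hpi; linarith
  set φ := π - |θ| with hφ
  have hcφ : Real.cos |θ| = -Real.cos φ := by
    rw [hφ, Real.cos_pi_sub, neg_neg]
  have hsφ : Real.sin |θ| = Real.sin φ := by
    rw [hφ, Real.sin_pi_sub]
  have hcosabs : Real.cos |θ| = Real.cos θ := Real.cos_abs θ
  have hφ2 : φ < π/2 := by
    by_contra hcon
    push_neg at hcon
    have h1 : |θ| ≤ π/2 := by linarith
    have : 0 ≤ Real.cos |θ| := Real.cos_nonneg_of_mem_Icc ⟨by linarith [abs_nonneg θ], h1⟩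
    rw [hcosabs] at this; linarith
  have hφε : ε < φ := by rw [hφ]; linarith
  have himabs : |z.im| = ‖z‖ * Real.sin φ := by
    rw [him, abs_mul, abs_of_nonneg hr.le, hsin_abs, hsφ]
  have hreabs : |z.re| = ‖z‖ * Real.cos φ := by
    rw [hre', abs_mul, abs_of_nonneg hr.le, abs_of_neg hcos]
    rw [← hcosabs, hcφ]; ring
  have hcφpos : 0 < Real.cos φ := Real.cos_pos_of_mem_Ioo ⟨by linarith, hφ2⟩
  have hsin : Real.sin ε ≤ Real.sin φ := by
    apply (Real.strictMonoOn_sin.monotoneOn) _ _ hφε.le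
    · constructor <;> linarith
    · constructor <;> linarith
  have hcε : 0 < Real.cos ε := Real.cos_pos_of_mem_Ioo ⟨by linarith, by linarith⟩
  have hsub : 0 ≤ Real.sin (φ - ε) := by
    apply Real.sin_nonneg_of_nonneg_of_le_pi (by linarith)
    have := Real.pi_pos; linarith
  rw [Real.sin_sub] at hsub
  constructor
  · have h2 : Real.tan ε * Real.cos φ ≤ Real.sin φ := by
      rw [Real.tan_eq_sin_div_cos, div_mul_eq_mul_div, div_le_iff₀ hcε]
      nlinarith
    rw [hreabs, himabs]
    nlinarith
  · rw [himabs]; nlinarith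



lemma abs_le_of_sq_le' (x N : ℝ) (hN : 0 ≤ N) (h : x^2 ≤ N^2) : |x| ≤ N := by
  rw [← Real.sqrt_sq_eq_abs, ← Real.sqrt_sq hN]; exact Real.sqrt_le_sqrt h

lemma core (t1 t2 s1 cG : ℝ) (ht1 : 0 < t1) (ht2 : 0 < t2) (ht : t2 < t1)
    (hs1 : 0 < s1) (hs1' : s1 ≤ 1) (hcG : 0 < cG) (hcG' : cG ≤ 1) :
    ∃ c > 0, ∀ x₁ y₁ x₂ y₂ r₁ G N : ℝ,
      0 < r₁ → 0 < G → |x₁| ≤ r₁ → r₁ ≤ |x₁| + |y₁| →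
      (x₁ < 0 → t1 * |x₁| ≤ |y₁| ∧ s1 * r₁ ≤ |y₁|) →
      cG * G ≤ x₂ → x₂ ≤ G → |y₂| ≤ t2 * x₂ →
      0 ≤ N → N^2 = (x₁+x₂)^2 + (y₁+y₂)^2 →
      c * (r₁ + G) ≤ N + (x₁ + x₂) := by
  have he0 : 0 < t1 - t2 := by linarith
  set e := t1 - t2 with he
  have hden1 : (0:ℝ) < 3 + t2 := by linarith
  have hden2 : (0:ℝ) < e + t2*(1+t1) + (1+t1) := by
    have : 0 < t2*(1+t1) := mul_pos ht2 (by linarith)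
    linarith
  have hden3 : (0:ℝ) < (1+t1) * t1 * (2+t1+t2) :=
    mul_pos (mul_pos (by linarith) ht1) (by linarith)
  set cA := cG / (3 + t2) with hcA
  set cB := e * s1 * cG / (e + t2*(1+t1) + (1+t1)) with hcB
  set cC := e^2 * s1 * t1 * cG / ((1+t1) * t1 * (2+t1+t2)) with hcC
  have hcA0 : 0 < cA := div_pos hcG hden1
  have hcB0 : 0 < cB := div_pos (mul_pos (mul_pos he0 hs1) hcG) hden2
  have hcC0 : 0 < cC := div_pos (mul_pos (mul_pos (mul_pos (pow_pos he0 2) hs1) ht1) hcG) hden3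
  refine ⟨min (min cA cB) cC, lt_min (lt_min hcA0 hcB0) hcC0, ?_⟩
  intro x₁ y₁ x₂ y₂ r₁ G N hr₁ hG hx1 hr hneg hx2 hx2' hy2 hN0 hNsq
  set c := min (min cA cB) cC with hc
  have hc0 : 0 < c := lt_min (lt_min hcA0 hcB0) hcC0
  have hx2pos : 0 < x₂ := lt_of_lt_of_le (mul_pos hcG hG) hx2
  have hrG : 0 ≤ r₁ + G := by linarith only [hr₁, hG]
  have hN1 : |x₁ + x₂| ≤ N := by
    apply abs_le_of_sq_le' _ _ hN0; linarith only [hNsq, sq_nonneg (y₁+y₂)]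
  have hN2 : |y₁ + y₂| ≤ N := by
    apply abs_le_of_sq_le' _ _ hN0; linarith only [hNsq, sq_nonneg (x₁+x₂)]
  set f := N + (x₁ + x₂) with hf
  have hf0 : 0 ≤ f := by
    have h0 := (abs_le.mp hN1).1
    simp only [hf]; linarith only [h0]
  rcases le_or_gt 0 x₁ with hA | hA
  · -- Case A
    have hcle : c ≤ cA := le_trans (min_le_left _ _) (min_le_left _ _)
    have hy1b : |y₁| ≤ N + t2 * x₂ := by
      have h0 : |y₁| ≤ |y₁ + y₂| + |y₂| := by
        calc |y₁| = |(y₁ + y₂) + (-y₂)| := by ring_nf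
        _ ≤ |y₁ + y₂| + |(-y₂)| := abs_add_le _ _
        _ = |y₁ + y₂| + |y₂| := by rw [abs_neg]
      linarith only [h0, hN2, hy2]
    have hx1N : x₁ ≤ N := by linarith only [(abs_le.mp hN1).2, hx2pos.le]
    have hxf : x₂ ≤ f := by simp only [hf]; linarith only [hN0, hA]
    have hNf : N ≤ f := by simp only [hf]; linarith only [hA, hx2pos]
    have h1 : r₁ ≤ x₁ + |y₁| := by rw [abs_of_nonneg hA] at hr; exact hr
    have h4 : t2 * x₂ ≤ t2 * f := mul_le_mul_of_nonneg_left hxf ht2.le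
    have h5 : cG * r₁ ≤ r₁ := mul_le_of_le_one_left hr₁.le hcG'
    have h2 : cG * G ≤ f := le_trans hx2 hxf
    have key : cG * (r₁ + G) ≤ (3 + t2) * f := by
      linarith only [h1, hy1b, h4, h5, hx1N, hNf, h2]
    calc c * (r₁ + G) ≤ cA * (r₁ + G) := mul_le_mul_of_nonneg_right hcle hrG
    _ = cG * (r₁ + G) / (3 + t2) := by rw [hcA]; ring
    _ ≤ f := by rw [div_le_iff₀ hden1]; linarith only [key]
  · -- x₁ < 0
    obtain ⟨hM1, hM2⟩ := hneg hA
    set M := |y₁| with hM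
    have hM0 : 0 < M := lt_of_lt_of_le (mul_pos hs1 hr₁) hM2
    have hax : |x₁| = -x₁ := abs_of_neg hA
    rw [hax] at hx1 hr hM1
    have hImlow : M - t2 * x₂ ≤ |y₁ + y₂| := by
      have h0 : M ≤ |y₁ + y₂| + |y₂| := by
        calc M = |(y₁ + y₂) + (-y₂)| := by rw [hM]; ring_nf
        _ ≤ |y₁ + y₂| + |(-y₂)| := abs_add_le _ _
        _ = |y₁ + y₂| + |y₂| := by rw [abs_neg]
      linarith only [h0, hy2]
    rcases le_or_gt (-x₁) x₂ with hB | hB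
    · -- Case B : Re w ≥ 0
      have hcle : c ≤ cB := le_trans (min_le_left _ _) (min_le_right _ _)
      have hNf : N ≤ f := by simp only [hf]; linarith only [hB]
      have hMb : M ≤ f + t2 * x₂ := by
        have h0 := hN2
        simp only [hf]; linarith only [h0, hImlow, hB]
      have key1 : e * x₂ ≤ (1 + t1) * f := by
        have h1' : x₂ - (-x₁) ≤ f := by simp only [hf]; linarith only [hN0]
        have h2 : t1 * (x₂ - (-x₁)) ≤ t1 * f := mul_le_mul_of_nonneg_left h1' ht1.le
        simp only [he]; linarith only [h2, hM1, hMb]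
      have p0 : (e * s1 * cG) * r₁ ≤ (e * s1) * r₁ :=
        mul_le_mul_of_nonneg_right
          (mul_le_of_le_one_right (mul_nonneg he0.le hs1.le) hcG') hr₁.le
      have p1 : e * (s1 * r₁) ≤ e * M := mul_le_mul_of_nonneg_left hM2 he0.le
      have p2 : e * M ≤ e * (f + t2 * x₂) := mul_le_mul_of_nonneg_left hMb he0.le
      have p3 : t2 * (e * x₂) ≤ t2 * ((1+t1) * f) := mul_le_mul_of_nonneg_left key1 ht2.le
      have p4 : (e * s1 * cG) * G ≤ (e * s1) * x₂ := by
        have := mul_le_mul_of_nonneg_left hx2 (mul_nonneg he0.le hs1.le)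
        linarith only [this]
      have p5 : (e * s1) * x₂ ≤ e * x₂ :=
        mul_le_mul_of_nonneg_right (mul_le_of_le_one_right he0.le hs1') hx2pos.le
      have key : (e * s1 * cG) * (r₁ + G) ≤ (e + t2*(1+t1) + (1+t1)) * f := by
        linarith only [p0, p1, p2, p3, p4, p5, key1]
      calc c * (r₁ + G) ≤ cB * (r₁ + G) := mul_le_mul_of_nonneg_right hcle hrG
      _ = (e * s1 * cG) * (r₁ + G) / (e + t2*(1+t1) + (1+t1)) := by rw [hcB]; ring
      _ ≤ f := by rw [div_le_iff₀ hden2]; linarith only [key]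
    · -- Case C : Re w < 0
      have hcle : c ≤ cC := min_le_right _ _
      have q2 : t1 * (t2 * x₂) ≤ t1 * (t2 * (-x₁)) :=
        mul_le_mul_of_nonneg_left (mul_le_mul_of_nonneg_left hB.le ht2.le) ht1.le
      have q3 : t2 * (t1 * (-x₁)) ≤ t2 * M := mul_le_mul_of_nonneg_left hM1 ht2.le
      have hIm2 : e * M ≤ t1 * |y₁ + y₂| := by
        have q1 : t1 * (M - t2 * x₂) ≤ t1 * |y₁ + y₂| :=
          mul_le_mul_of_nonneg_left hImlow ht1.le
        simp only [he]; linarith only [q1, q2, q3]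
      have hkey : f * (N - (x₁ + x₂)) = (y₁ + y₂)^2 := by
        simp only [hf]; linear_combination hNsq
      have hNb : t1 * N ≤ (1 + t1 + t2) * M := by
        have h1 : N ≤ |x₁ + x₂| + |y₁ + y₂| := by
          have h6 := abs_le_of_sq_le' N (|x₁ + x₂| + |y₁ + y₂|)
            (by positivity)
            (by linarith only [hNsq, sq_abs (x₁+x₂), sq_abs (y₁+y₂),
                  mul_nonneg (abs_nonneg (x₁+x₂)) (abs_nonneg (y₁+y₂))])
          rw [abs_of_nonneg hN0] at h6; exact h6
        have h2 : |x₁ + x₂| ≤ -x₁ := by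
          rw [abs_of_nonpos (by linarith only [hB])]; linarith only [hx2pos]
        have h3 : |y₁ + y₂| ≤ M + t2 * x₂ := by
          have h7 : |y₁ + y₂| ≤ |y₁| + |y₂| := abs_add_le _ _
          rw [← hM] at h7; linarith only [h7, hy2]
        have h4 : t1 * N ≤ t1 * ((-x₁) + (M + t2 * x₂)) :=
          mul_le_mul_of_nonneg_left (by linarith only [h1, h2, h3]) ht1.le
        linarith only [h4, q2, q3, hM1]
      have hfM : e^2 * M ≤ t1 * (2+t1+t2) * f := by
        have h1 : (e * M)^2 ≤ (t1 * |y₁ + y₂|)^2 :=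
          pow_le_pow_left₀ (mul_nonneg he0.le hM0.le) hIm2 2
        have h2 : (t1 * |y₁ + y₂|)^2 = t1^2 * (f * (N - (x₁ + x₂))) := by
          rw [mul_pow, sq_abs, hkey]
        have h3 : t1 * (N - (x₁ + x₂)) ≤ (2+t1+t2) * M := by
          have h8 : (0:ℝ) ≤ t1 * x₂ := mul_nonneg ht1.le hx2pos.le
          linarith only [hNb, hM1, h8]
        have h4 : (t1 * f) * (t1 * (N - (x₁ + x₂))) ≤ (t1 * f) * ((2+t1+t2) * M) :=
          mul_le_mul_of_nonneg_left h3 (mul_nonneg ht1.le hf0)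
        have h5 : (e * M)^2 ≤ (t1 * (2+t1+t2) * f) * M := by
          linarith only [h1, h2, h4]
        exact le_of_mul_le_mul_right (by linarith only [h5]) hM0
      have w1 : (s1 * t1 * cG) * r₁ ≤ (s1 * t1) * r₁ :=
        mul_le_mul_of_nonneg_right
          (mul_le_of_le_one_right (mul_nonneg hs1.le ht1.le) hcG') hr₁.le
      have w2 : t1 * (s1 * r₁) ≤ t1 * M := mul_le_mul_of_nonneg_left hM2 ht1.le
      have w3 : (s1 * t1 * cG) * G ≤ (s1 * t1) * x₂ := by
        have := mul_le_mul_of_nonneg_left hx2 (mul_nonneg hs1.le ht1.le)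
        linarith only [this]
      have w4 : (s1 * t1) * x₂ ≤ (s1 * t1) * (-x₁) :=
        mul_le_mul_of_nonneg_left hB.le (mul_nonneg hs1.le ht1.le)
      have w5 : s1 * (t1 * (-x₁)) ≤ s1 * M := mul_le_mul_of_nonneg_left hM1 hs1.le
      have w6 : s1 * M ≤ M := mul_le_of_le_one_left hM0.le hs1'
      have w7 : (s1 * t1 * cG) * (r₁ + G) ≤ (1 + t1) * M := by
        linarith only [w1, w2, w3, w4, w5, w6]
      have w8 : e^2 * ((s1 * t1 * cG) * (r₁ + G)) ≤ e^2 * ((1+t1) * M) :=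
        mul_le_mul_of_nonneg_left w7 (sq_nonneg e)
      have w9 : (1+t1) * (e^2 * M) ≤ (1+t1) * (t1 * (2+t1+t2) * f) :=
        mul_le_mul_of_nonneg_left hfM (by linarith only [ht1])
      have key : (e^2 * s1 * t1 * cG) * (r₁ + G) ≤ ((1+t1) * t1 * (2+t1+t2)) * f := by
        linarith only [w8, w9]
      calc c * (r₁ + G) ≤ cC * (r₁ + G) := mul_le_mul_of_nonneg_right hcle hrG
      _ = (e^2 * s1 * t1 * cG) * (r₁ + G) / ((1+t1) * t1 * (2+t1+t2)) := by rw [hcC]; ring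
      _ ≤ f := by rw [div_le_iff₀ hden3]; linarith only [key]

theorem stmt2 (n : ℕ) (hn : 2 ≤ n) (ε η ρ μ : ℝ) (hε : 0 < ε) (hε2 : ε < π/2)
    (hη0 : 0 < η) (hη : η < min (π/4) (ε/2)) (hρ : 0 < ρ) (hμ : 0 < μ) :
    ∃ c > 0, ∃ C > 0, ∀ (lam : ℂ), lam ≠ 0 → |lam.arg| < π - ε →
      ∀ ξ : Fin (n-1) → ℂ,
      (∀ j, ξ j ≠ 0 ∧ (|(ξ j).arg| < η ∨ π - η < |(ξ j).arg|)) →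
      let A : ℂ := (∑ j, (ξ j)^2) ^ (1/2 : ℂ)
      let At : ℝ := Real.sqrt (∑ j, ‖ξ j‖^2)
      let B : ℂ := ((ρ * μ⁻¹ : ℝ) * lam + A^2) ^ (1/2 : ℂ)
      c * (Real.sqrt ‖lam‖ + At) ≤ B.re ∧ B.re ≤ ‖B‖ ∧
        ‖B‖ ≤ C * (Real.sqrt ‖lam‖ + At) := by
  have hπ := Real.pi_pos
  have hη4 : η < π/4 := lt_of_lt_of_le hη (min_le_left _ _)
  have hηε : 2*η < ε := by have := lt_of_lt_of_le hη (min_le_right _ _); linarith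
  set t1 := Real.tan ε with ht1def
  set t2 := Real.tan (2*η) with ht2def
  set s1 := Real.sin ε with hs1def
  set cG := Real.cos (2*η) with hcGdef
  have ht1 : 0 < t1 := Real.tan_pos_of_pos_of_lt_pi_div_two hε hε2
  have ht2 : 0 < t2 := Real.tan_pos_of_pos_of_lt_pi_div_two (by linarith) (by linarith)
  have ht : t2 < t1 := Real.tan_lt_tan_of_nonneg_of_lt_pi_div_two (by linarith) hε2 hηε
  have hs1 : 0 < s1 := Real.sin_pos_of_pos_of_lt_pi hε (by linarith)
  have hs1' : s1 ≤ 1 := Real.sin_le_one ε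
  have hcG : 0 < cG := Real.cos_pos_of_mem_Ioo ⟨by linarith, by linarith⟩
  have hcG' : cG ≤ 1 := Real.cos_le_one _
  have hsincos : Real.sin (2*η) = t2 * cG := by
    rw [ht2def, Real.tan_eq_sin_div_cos, hcGdef, div_mul_cancel₀ _ (by rw [← hcGdef]; exact hcG.ne')]
  obtain ⟨c₀, hc₀, hcore⟩ := core t1 t2 s1 cG ht1 ht2 ht hs1 hs1' hcG hcG'
  set κ := ρ * μ⁻¹ with hκdef
  have hκ : 0 < κ := mul_pos hρ (inv_pos.mpr hμ)
  set m := min κ 1 with hmdef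
  have hm : 0 < m := lt_min hκ one_pos
  refine ⟨Real.sqrt (c₀ * m) / 2, div_pos (Real.sqrt_pos.mpr (mul_pos hc₀ hm)) two_pos,
    max (Real.sqrt κ) 1, lt_of_lt_of_le one_pos (le_max_right _ _), ?_⟩
  set c := Real.sqrt (c₀ * m) / 2 with hcdef
  set C := max (Real.sqrt κ) 1 with hCdef
  have hc0 : 0 < c := div_pos (Real.sqrt_pos.mpr (mul_pos hc₀ hm)) two_pos
  have hC0 : 0 < C := lt_of_lt_of_le one_pos (le_max_right _ _)
  intro lam hlam harg ξ hξ
  intro A At B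
  -- basic data
  set S : ℂ := ∑ j, (ξ j)^2 with hSdef
  set G : ℝ := ∑ j, ‖ξ j‖^2 with hGdef
  have hAdef : A = S ^ (1/2:ℂ) := rfl
  have hAtdef : At = Real.sqrt G := rfl
  set w : ℂ := (κ:ℂ) * lam + A^2 with hwdef
  have hBdef : B = w ^ (1/2:ℂ) := rfl
  clear_value A At B
  have hne : Nonempty (Fin (n-1)) := ⟨⟨0, by omega⟩⟩
  have hG : 0 < G := by
    rw [hGdef]
    exact Finset.sum_pos (fun j _ => pow_pos (norm_pos_iff.mpr (hξ j).1) 2)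
      Finset.univ_nonempty
  have hsq := fun j => sq_sector η hη0 (by linarith) (ξ j) (hξ j).1 (hξ j).2
  have hSre : cG * G ≤ S.re := by
    rw [hSdef, Complex.re_sum, hGdef, Finset.mul_sum]
    exact Finset.sum_le_sum (fun j _ => (hsq j).1)
  have hSim : |S.im| ≤ Real.sin (2*η) * G := by
    rw [hSdef, Complex.im_sum, hGdef, Finset.mul_sum]
    exact le_trans (Finset.abs_sum_le_sum_abs _ _)
      (Finset.sum_le_sum (fun j _ => (hsq j).2))
  have hSre_pos : 0 < S.re := lt_of_lt_of_le (mul_pos hcG hG) hSre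
  have hSnorm : ‖S‖ ≤ G := by
    rw [hSdef, hGdef]
    refine le_trans (norm_sum_le _ _) ?_
    apply Finset.sum_le_sum (fun j _ => ?_)
    rw [norm_pow]
  have hSreG : S.re ≤ G := by
    have h := Complex.re_le_norm S
    exact le_trans h hSnorm
  have hSimt2 : |S.im| ≤ t2 * S.re := by
    have h1 : Real.sin (2*η) * G = t2 * (cG * G) := by rw [hsincos]; ring
    have h2 : t2 * (cG * G) ≤ t2 * S.re := mul_le_mul_of_nonneg_left hSre ht2.le
    linarith only [hSim, h1, h2]
  -- w
  have hA2 : A^2 = S := by rw [hAdef]; exact cpow_half_sq S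
  have hwS : w = (κ:ℂ) * lam + S := by rw [hwdef, hA2]
  have hwre : w.re = κ * lam.re + S.re := by
    rw [hwS]; simp [Complex.add_re, Complex.mul_re]
  have hwim : w.im = κ * lam.im + S.im := by
    rw [hwS]; simp [Complex.add_im, Complex.mul_im]
  set r₁ := κ * ‖lam‖ with hr₁def
  have hr₁ : 0 < r₁ := mul_pos hκ (norm_pos_iff.mpr hlam)
  have hx1 : |κ * lam.re| ≤ r₁ := by
    rw [abs_mul, abs_of_pos hκ, hr₁def]
    exact mul_le_mul_of_nonneg_left (Complex.abs_re_le_norm lam) hκ.le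
  have hy1 : |κ * lam.im| = κ * |lam.im| := by rw [abs_mul, abs_of_pos hκ]
  have ha1 : |κ * lam.re| = κ * |lam.re| := by rw [abs_mul, abs_of_pos hκ]
  have hr : r₁ ≤ |κ * lam.re| + |κ * lam.im| := by
    rw [ha1, hy1, hr₁def]
    have h0 := mul_le_mul_of_nonneg_left (Complex.norm_le_abs_re_add_abs_im lam) hκ.le
    linarith only [h0]
  have hneg : κ * lam.re < 0 → t1 * |κ * lam.re| ≤ |κ * lam.im| ∧ s1 * r₁ ≤ |κ * lam.im| := by
    intro hn'
    have hlre : lam.re < 0 := by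
      by_contra hcon; push_neg at hcon
      exact absurd (mul_nonneg hκ.le hcon) (not_le.mpr hn')
    obtain ⟨u1, u2⟩ := lam_sector ε hε hε2 lam hlam harg hlre
    constructor
    · rw [abs_mul, abs_of_pos hκ, hy1]
      calc t1 * (κ * |lam.re|) = κ * (t1 * |lam.re|) := by ring
      _ ≤ κ * |lam.im| := mul_le_mul_of_nonneg_left u1 hκ.le
    · rw [hy1, hr₁def]
      calc s1 * (κ * ‖lam‖) = κ * (s1 * ‖lam‖) := by ring
      _ ≤ κ * |lam.im| := mul_le_mul_of_nonneg_left u2 hκ.le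
  have hN0 : (0:ℝ) ≤ ‖w‖ := norm_nonneg w
  have hNsq : ‖w‖^2 = (κ * lam.re + S.re)^2 + (κ * lam.im + S.im)^2 := by
    rw [← hwre, ← hwim, Complex.sq_norm, Complex.normSq_apply]
    ring
  have hflow := hcore (κ * lam.re) (κ * lam.im) S.re S.im r₁ G ‖w‖
    hr₁ hG hx1 hr hneg hSre hSreG hSimt2 hN0 hNsq
  -- B facts
  have hBsq : B^2 = w := by rw [hBdef]; exact cpow_half_sq w
  have hBre0 : 0 ≤ B.re := by rw [hBdef]; exact cpow_half_re_nonneg w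
  have h2re : 2 * B.re^2 = ‖w‖ + w.re := by
    have h1 : w.re = B.re^2 - B.im^2 := by
      rw [← hBsq, sq, Complex.mul_re]; ring
    have h2 : ‖w‖ = B.re^2 + B.im^2 := by
      rw [← hBsq, norm_pow, Complex.sq_norm, Complex.normSq_apply]
      ring
    linarith only [h1, h2]
  have hBnormsq : ‖B‖^2 = ‖w‖ := by rw [← hBsq, norm_pow]
  -- sqrt quantities
  set L := Real.sqrt ‖lam‖ with hLdef
  have hL0 : 0 ≤ L := Real.sqrt_nonneg _
  have hL2 : L^2 = ‖lam‖ := Real.sq_sqrt (norm_nonneg _)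
  have hAt0 : 0 ≤ At := by rw [hAtdef]; exact Real.sqrt_nonneg _
  have hAt2 : At^2 = G := by rw [hAtdef]; exact Real.sq_sqrt hG.le
  have hc2 : c^2 = c₀ * m / 4 := by
    rw [hcdef, div_pow, Real.sq_sqrt (mul_pos hc₀ hm).le]; norm_num
  refine ⟨?_, ?_, ?_⟩
  · -- lower bound
    have hkey : (c * (L + At))^2 ≤ B.re^2 := by
      have e1 : (L + At)^2 ≤ 2 * (L^2 + At^2) := by linarith only [sq_nonneg (L - At)]
      have e2 : m * (‖lam‖ + G) ≤ r₁ + G := by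
        have m1 : m * ‖lam‖ ≤ κ * ‖lam‖ :=
          mul_le_mul_of_nonneg_right (min_le_left _ _) (norm_nonneg _)
        have m2 : m * G ≤ G := mul_le_of_le_one_left hG.le (min_le_right _ _)
        rw [hr₁def]; linarith only [m1, m2]
      have e3 : c₀ * (r₁ + G) ≤ 2 * B.re^2 := by
        rw [h2re, hwre]; linarith only [hflow]
      have e4 : (c * (L + At))^2 = (c₀ * m / 4) * (L + At)^2 := by
        rw [mul_pow, hc2]
      have e5 : (c₀ * m / 4) * (L + At)^2 ≤ (c₀ * m / 4) * (2 * (L^2 + At^2)) :=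
        mul_le_mul_of_nonneg_left e1 (div_nonneg (mul_nonneg hc₀.le hm.le) (by norm_num))
      have e6 : (c₀ * m / 4) * (2 * (L^2 + At^2)) = c₀ * (m * (‖lam‖ + G)) / 2 := by
        rw [hL2, hAt2]; ring
      have e7 : c₀ * (m * (‖lam‖ + G)) ≤ c₀ * (r₁ + G) :=
        mul_le_mul_of_nonneg_left e2 hc₀.le
      linarith only [e3, e4, e5, e6, e7]
    have h9 := abs_le_of_sq_le' (c * (L + At)) B.re hBre0 hkey
    rwa [abs_of_nonneg (mul_nonneg hc0.le (add_nonneg hL0 hAt0))] at h9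
  · -- middle
    exact Complex.re_le_norm B
  · -- upper bound
    have hCκ : κ ≤ C^2 := by
      have : Real.sqrt κ ≤ C := le_max_left _ _
      calc κ = (Real.sqrt κ)^2 := (Real.sq_sqrt hκ.le).symm
      _ ≤ C^2 := pow_le_pow_left₀ (Real.sqrt_nonneg _) this 2
    have hC1 : 1 ≤ C^2 := by
      calc (1:ℝ) = 1^2 := by norm_num
      _ ≤ C^2 := pow_le_pow_left₀ (by norm_num) (le_max_right _ _) 2
    have hw_up : ‖w‖ ≤ κ * ‖lam‖ + G := by
      rw [hwS]
      refine le_trans (norm_add_le _ _) ?_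
      have : ‖(κ:ℂ) * lam‖ = κ * ‖lam‖ := by
        rw [norm_mul, Complex.norm_real, Real.norm_eq_abs, abs_of_pos hκ]
      rw [this]
      linarith only [hSnorm]
    have hkey : ‖B‖^2 ≤ (C * (L + At))^2 := by
      rw [hBnormsq, mul_pow]
      have e1 : κ * ‖lam‖ + G ≤ C^2 * (L^2 + At^2) := by
        have m1 : κ * ‖lam‖ ≤ C^2 * ‖lam‖ :=
          mul_le_mul_of_nonneg_right hCκ (norm_nonneg _)
        have m2 : G ≤ C^2 * G := le_mul_of_one_le_left hG.le hC1
        rw [hL2, hAt2]; linarith only [m1, m2]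
      have e2 : L^2 + At^2 ≤ (L + At)^2 := by linarith only [mul_nonneg hL0 hAt0]
      have e3 : C^2 * (L^2 + At^2) ≤ C^2 * (L + At)^2 :=
        mul_le_mul_of_nonneg_left e2 (sq_nonneg C)
      linarith only [hw_up, e1, e3]
    have h9 := abs_le_of_sq_le' ‖B‖ (C * (L + At))
      (mul_nonneg hC0.le (add_nonneg hL0 hAt0)) hkey
    rwa [abs_of_nonneg (norm_nonneg _)] at h9
end

section
/- Let n ≥ 2, 0 < ε < π/2, and choose η > 0 small. For λ ∈ Σ_ε, k ∈ {1,…,n−1}, ρ, μ > 0, and ξ = (ξ', ξ_n) ∈ (Σ̃_η)ⁿ (each component nonzero complex in the double sector), define A = sqrt(Σ_{j<n} ξ_j²), |ξ|² := A² + ξ_n², and the symbol m(λ, ξ) := |λ| · (iξ_n/A) · 1/(ρλ + μ|ξ|²) · (−ξ_nξ_k/|ξ|²). Then there exist η, C > 0 (depending on ε, ρ, μ, n) such that |m(λ,ξ)| ≤ C uniformly in λ ∈ Σ_ε and ξ ∈ (Σ̃_η)ⁿ. -/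
open Real

/-- In a small double sector around the real axis, `|Re z| ≥ cos η · |z|`. -/
lemma aux_sector_re (η : ℝ) (hη2 : η < π/2) (z : ℂ) (hz : z ≠ 0)
    (h : |z.arg| < η ∨ π - η < |z.arg|) :
    Real.cos η * ‖z‖ ≤ |z.re| := by
  have habs : 0 < ‖z‖ := by
    simpa [norm_pos_iff] using hz
  have hzre : z.re = ‖z‖ * Real.cos z.arg := by
    rw [Complex.cos_arg hz]
    field_simp
  rcases h with h | h
  · have h1 : Real.cos η ≤ Real.cos z.arg := by
      rw [← Real.cos_abs z.arg]
      exact Real.cos_le_cos_of_nonneg_of_le_pi (abs_nonneg _)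
        (by linarith [Real.pi_pos]) h.le
    have : Real.cos η * ‖z‖ ≤ z.re := by
      rw [hzre]
      nlinarith
    exact this.trans (le_abs_self _)
  · have harg : |z.arg| ≤ π := Complex.abs_arg_le_pi z
    have h1 : Real.cos z.arg ≤ -Real.cos η := by
      rw [← Real.cos_abs z.arg]
      have := Real.cos_le_cos_of_nonneg_of_le_pi
        (show (0:ℝ) ≤ π - η by linarith [Real.pi_pos]) harg h.le
      rwa [Real.cos_pi_sub] at this
    have : Real.cos η * ‖z‖ ≤ -z.re := by
      rw [hzre]
      nlinarith
    exact this.trans (neg_le_abs _)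

/-- In a small double sector, `Re (z²) ≥ cos (2η) · |z|²`. -/
lemma aux_sector_re_sq (η : ℝ) (hη : 0 < η) (hη2 : η < π/2) (z : ℂ) (hz : z ≠ 0)
    (h : |z.arg| < η ∨ π - η < |z.arg|) :
    Real.cos (2*η) * ‖z‖ ^ 2 ≤ (z^2).re := by
  have hre := aux_sector_re η hη2 z hz h
  have hcosη : 0 < Real.cos η := Real.cos_pos_of_mem_Ioo ⟨by linarith, hη2⟩
  have h2 : (z^2).re = 2*z.re^2 - ‖z‖^2 := by
    rw [pow_two, Complex.mul_re]
    have h5 := Complex.sq_norm z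
    rw [Complex.normSq_apply] at h5
    nlinarith [h5]
  have h3 : (Real.cos η * ‖z‖)^2 ≤ z.re^2 := by
    have h4 := mul_le_mul hre hre (by positivity) (abs_nonneg z.re)
    nlinarith [sq_abs z.re, h4]
  rw [Real.cos_two_mul, h2]
  nlinarith [h3]

set_option maxHeartbeats 1600000 in
theorem stmt13 (n : ℕ) (hn : 2 ≤ n) (ε ρ μ : ℝ) (hε : 0 < ε) (hε2 : ε < π/2)
    (hρ : 0 < ρ) (hμ : 0 < μ) (k : Fin (n-1)) :
    ∃ η > 0, ∃ C > 0, ∀ (lam : ℂ), lam ≠ 0 → |lam.arg| < π - ε →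
      ∀ (ξ' : Fin (n-1) → ℂ) (ξn : ℂ),
      (∀ j, ξ' j ≠ 0 ∧ (|(ξ' j).arg| < η ∨ π - η < |(ξ' j).arg|)) →
      (ξn ≠ 0 ∧ (|ξn.arg| < η ∨ π - η < |ξn.arg|)) →
      let A : ℂ := (∑ j, (ξ' j)^2) ^ (1/2 : ℂ)
      let ξsq : ℂ := A^2 + ξn^2
      ‖(‖lam‖ : ℂ) * (Complex.I * ξn / A) * ((ρ : ℂ) * lam + (μ : ℂ) * ξsq)⁻¹
        * (-(ξn * ξ' k) / ξsq)‖ ≤ C := by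
  have hπ := Real.pi_pos
  set c0 := Real.cos (ε/4) with hc0def
  have hc0 : 0 < c0 := by
    rw [hc0def]; exact Real.cos_pos_of_mem_Ioo ⟨by linarith, by linarith⟩
  have hc0le : c0 ≤ 1 := by rw [hc0def]; exact Real.cos_le_one _
  have hsε2 : 0 < Real.sin (ε/2) := Real.sin_pos_of_pos_of_lt_pi (by linarith) (by linarith)
  have hsqc0 : 0 < Real.sqrt c0 := Real.sqrt_pos.mpr hc0
  clear_value c0
  refine ⟨ε/8, by linarith, (ρ * Real.sin (ε/2) * c0 * Real.sqrt c0)⁻¹,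
    inv_pos.mpr (mul_pos (mul_pos (mul_pos hρ hsε2) hc0) hsqc0), ?_⟩
  intro lam hlam harg ξ' ξn hξ' hξn A ξsq
  have hAdef : A = (∑ j, (ξ' j)^2) ^ (1/2 : ℂ) := rfl
  have hQdef : ξsq = A^2 + ξn^2 := rfl
  clear_value A ξsq
  have hη2 : ε/8 < π/2 := by linarith
  have h2η : 2 * (ε/8) = ε/4 := by ring
  -- sector bounds for each component
  have hsec : ∀ j, c0 * ‖ξ' j‖ ^ 2 ≤ ((ξ' j)^2).re := by
    intro j
    have := aux_sector_re_sq (ε/8) (by linarith) hη2 (ξ' j) (hξ' j).1 (hξ' j).2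
    rwa [h2η, ← hc0def] at this
  have hsecn : c0 * ‖ξn‖ ^ 2 ≤ (ξn^2).re := by
    have := aux_sector_re_sq (ε/8) (by linarith) hη2 ξn hξn.1 hξn.2
    rwa [h2η, ← hc0def] at this
  set w := ∑ j, (ξ' j)^2 with hwdef
  set S' := ∑ j, ‖ξ' j‖^2 with hS'def
  clear_value w S'
  have hwre : c0 * S' ≤ w.re := by
    rw [hwdef, Complex.re_sum, hS'def, Finset.mul_sum]
    exact Finset.sum_le_sum fun j _ => hsec j
  have hk_pos : 0 < ‖ξ' k‖ := norm_pos_iff.mpr (hξ' k).1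
  have hkS' : ‖ξ' k‖^2 ≤ S' := by
    rw [hS'def]
    exact Finset.single_le_sum (f := fun j => ‖ξ' j‖^2)
      (fun j _ => sq_nonneg _) (Finset.mem_univ k)
  have hS'_pos : 0 < S' := lt_of_lt_of_le (pow_pos hk_pos 2) hkS'
  have hwre_pos : 0 < w.re := lt_of_lt_of_le (mul_pos hc0 hS'_pos) hwre
  have hw_ne : w ≠ 0 := fun h => by simp [h] at hwre_pos
  have habsw : c0 * S' ≤ ‖w‖ :=
    le_trans hwre ((le_abs_self w.re).trans (Complex.abs_re_le_norm w))
  have habsw_pos : 0 < ‖w‖ := norm_pos_iff.mpr hw_ne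
  -- A
  have hA2 : A ^ 2 = w := by
    rw [hAdef, sq, ← Complex.cpow_add _ _ hw_ne]
    norm_num
  have hA_ne : A ≠ 0 := by
    intro h
    rw [h] at hA2
    exact hw_ne (by simpa using hA2.symm)
  have hA_pos : 0 < ‖A‖ := norm_pos_iff.mpr hA_ne
  have hA_sq : ‖A‖ ^ 2 = ‖w‖ := by
    rw [← hA2, norm_pow]
  -- ξsq
  set S2 := S' + ‖ξn‖ ^ 2 with hS2def
  clear_value S2
  have hS2_pos : 0 < S2 := by
    have := sq_nonneg (‖ξn‖)
    rw [hS2def]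
    linarith [hS'_pos]
  have hQre : c0 * S2 ≤ ξsq.re := by
    rw [hQdef, Complex.add_re, hA2, hS2def]
    have := hsecn
    linarith [hwre, mul_le_mul_of_nonneg_left (le_refl (‖ξn‖ ^ 2)) hc0.le,
      hsecn, (by ring : c0 * (S' + ‖ξn‖ ^ 2) = c0 * S' + c0 * ‖ξn‖ ^ 2)]
  have hQre_pos : 0 < ξsq.re := lt_of_lt_of_le (mul_pos hc0 hS2_pos) hQre
  have hQ_ne : ξsq ≠ 0 := fun h => by simp [h] at hQre_pos
  have habsQ_lb : c0 * S2 ≤ ‖ξsq‖ :=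
    le_trans hQre ((le_abs_self ξsq.re).trans (Complex.abs_re_le_norm ξsq))
  have habsQ_pos : 0 < ‖ξsq‖ := norm_pos_iff.mpr hQ_ne
  have habsQ_ub : ‖ξsq‖ ≤ S2 := by
    rw [hQdef, hA2, hS2def]
    calc ‖w + ξn^2‖ ≤ ‖w‖ + ‖ξn^2‖ :=
          norm_add_le _ _
      _ ≤ S' + ‖ξn‖ ^ 2 := by
          rw [norm_pow]
          have : ‖w‖ ≤ S' := by
            rw [hwdef, hS'def]
            refine le_trans (norm_sum_le _ _) ?_
            exact le_of_eq (Finset.sum_congr rfl fun j _ => norm_pow _ _)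
          linarith
  -- denominator lower bound
  set t := lam.arg / 2 with htdef
  clear_value t
  have hargpi : |lam.arg| ≤ π := Complex.abs_arg_le_pi lam
  have htabs : |t| ≤ π/2 - ε/2 := by
    rw [htdef, abs_div, abs_of_pos (by norm_num : (0:ℝ) < 2)]
    linarith [harg]
  have hct : Real.sin (ε/2) ≤ Real.cos t := by
    rw [← Real.cos_abs t, ← Real.cos_pi_div_two_sub]
    exact Real.cos_le_cos_of_nonneg_of_le_pi (abs_nonneg _) (by linarith) (by linarith)
  have hct_pos : 0 < Real.cos t := lt_of_lt_of_le hsε2 hct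
  have hpyth : Real.sin t ^ 2 + Real.cos t ^ 2 = 1 := Real.sin_sq_add_cos_sq t
  have hpyth2 : Real.sin (ε/2) ^ 2 + Real.cos (ε/2) ^ 2 = 1 := Real.sin_sq_add_cos_sq (ε/2)
  have hst_sq : Real.sin t ^ 2 ≤ c0 ^ 2 := by
    have hct2 : Real.sin (ε/2)^2 ≤ Real.cos t^2 := pow_le_pow_left₀ hsε2.le hct 2
    have h1 : Real.sin t ^ 2 ≤ Real.cos (ε/2)^2 := by linarith
    have h2 : Real.cos (ε/2) ≤ c0 := by
      rw [hc0def]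
      exact Real.cos_le_cos_of_nonneg_of_le_pi (by linarith) (by linarith) (by linarith)
    have h3 : 0 ≤ Real.cos (ε/2) :=
      le_of_lt (Real.cos_pos_of_mem_Ioo ⟨by linarith, by linarith⟩)
    have h4 : Real.cos (ε/2)^2 ≤ c0^2 := pow_le_pow_left₀ h3 h2 2
    linarith
  set u := (ρ : ℂ) * lam + (μ : ℂ) * ξsq with hudef
  clear_value u
  have hu_re : u.re = ρ * lam.re + μ * ξsq.re := by
    simp [hudef, Complex.add_re, Complex.mul_re]
  have hu_im : u.im = ρ * lam.im + μ * ξsq.im := by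
    simp [hudef, Complex.add_im, Complex.mul_im]
  -- projection bound :  Re(e^{-it} u) ≤ |u|
  have hproj : Real.cos t * u.re + Real.sin t * u.im ≤ ‖u‖ := by
    have h1 : ‖u‖ = Real.sqrt (u.re^2 + u.im^2) := by
      rw [Complex.norm_def, Complex.normSq_apply]
      ring_nf
    have hx2 : (Real.cos t * u.re + Real.sin t * u.im)^2 ≤ u.re^2 + u.im^2 := by
      have e : (Real.cos t * u.re + Real.sin t * u.im)^2
          + (Real.cos t * u.im - Real.sin t * u.re)^2
          = (Real.sin t ^ 2 + Real.cos t ^ 2) * (u.re^2 + u.im^2) := by ring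
      rw [hpyth, one_mul] at e
      linarith only [e, sq_nonneg (Real.cos t * u.im - Real.sin t * u.re)]
    calc Real.cos t * u.re + Real.sin t * u.im
        ≤ |Real.cos t * u.re + Real.sin t * u.im| := le_abs_self _
      _ = Real.sqrt ((Real.cos t * u.re + Real.sin t * u.im)^2) :=
          (Real.sqrt_sq_eq_abs _).symm
      _ ≤ Real.sqrt (u.re^2 + u.im^2) := Real.sqrt_le_sqrt hx2
      _ = ‖u‖ := h1.symm
  -- the lambda part
  have hlam_abs : 0 < ‖lam‖ := norm_pos_iff.mpr hlam
  have hlam_re : lam.re = ‖lam‖ * Real.cos lam.arg := by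
    rw [Complex.cos_arg hlam]
    field_simp
  have hlam_im : lam.im = ‖lam‖ * Real.sin lam.arg := by
    rw [Complex.sin_arg]
    field_simp
  have hlam_part : Real.cos t * lam.re + Real.sin t * lam.im
      = ‖lam‖ * Real.cos t := by
    rw [hlam_re, hlam_im]
    have h1 : Real.cos (lam.arg - t)
        = Real.cos lam.arg * Real.cos t + Real.sin lam.arg * Real.sin t :=
      Real.cos_sub _ _
    have h2 : lam.arg - t = t := by rw [htdef]; ring
    rw [h2] at h1
    linear_combination (-‖lam‖) * h1
  -- the ξsq part is nonnegative
  have hQ_part : 0 ≤ Real.cos t * ξsq.re + Real.sin t * ξsq.im := by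
    have him : ξsq.re^2 + ξsq.im^2 ≤ S2^2 := by
      have h5 := Complex.sq_norm ξsq
      rw [Complex.normSq_apply] at h5
      have h6 : ‖ξsq‖ ^ 2 ≤ S2^2 :=
        pow_le_pow_left₀ (norm_nonneg _) habsQ_ub 2
      linarith only [h5, h6]
    have hre2 : c0^2 * S2^2 ≤ ξsq.re^2 := by
      have h7 := pow_le_pow_left₀ (mul_pos hc0 hS2_pos).le hQre 2
      calc c0^2 * S2^2 = (c0*S2)^2 := by ring
        _ ≤ ξsq.re^2 := h7
    have eim : ξsq.im^2 ≤ S2^2 - ξsq.re^2 := by linarith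
    have step1 : Real.sin t ^2 * ξsq.im^2 ≤ c0^2 * (S2^2 - ξsq.re^2) :=
      mul_le_mul hst_sq eim (sq_nonneg _) (sq_nonneg c0)
    have step2 : c0^2 * (S2^2 - ξsq.re^2) ≤ ξsq.re^2 - c0^2 * ξsq.re^2 := by
      have : c0^2 * (S2^2 - ξsq.re^2) = c0^2*S2^2 - c0^2*ξsq.re^2 := by ring
      linarith [hre2]
    have step3 : ξsq.re^2 - c0^2*ξsq.re^2 ≤ ξsq.re^2 - Real.sin t^2 * ξsq.re^2 := by
      have := mul_le_mul_of_nonneg_right hst_sq (sq_nonneg ξsq.re)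
      linarith
    have hp2 : Real.sin t^2 * ξsq.re^2 + Real.cos t^2 * ξsq.re^2 = ξsq.re^2 := by
      linear_combination ξsq.re^2 * hpyth
    have key : Real.sin t^2 * ξsq.im^2 ≤ Real.cos t^2 * ξsq.re^2 := by linarith
    have h0cr : 0 ≤ Real.cos t * ξsq.re := mul_nonneg hct_pos.le hQre_pos.le
    by_cases hsgn : 0 ≤ Real.sin t * ξsq.im
    · linarith
    · push_neg at hsgn
      have e1 : (-(Real.sin t * ξsq.im))^2 ≤ (Real.cos t * ξsq.re)^2 := by
        have r1 : (-(Real.sin t * ξsq.im))^2 = Real.sin t^2 * ξsq.im^2 := by ring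
        have r2 : (Real.cos t * ξsq.re)^2 = Real.cos t^2 * ξsq.re^2 := by ring
        rw [r1, r2]
        exact key
      have e2 : -(Real.sin t * ξsq.im) ≤ Real.cos t * ξsq.re :=
        (pow_le_pow_iff_left₀ (by linarith) h0cr two_ne_zero).mp e1
      linarith
  have hden : ρ * Real.sin (ε/2) * ‖lam‖ ≤ ‖u‖ := by
    have h1 : ρ * Real.sin (ε/2) * ‖lam‖
        ≤ Real.cos t * u.re + Real.sin t * u.im := by
      rw [hu_re, hu_im]
      have e : Real.cos t * (ρ * lam.re + μ * ξsq.re)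
            + Real.sin t * (ρ * lam.im + μ * ξsq.im)
          = ρ * (Real.cos t * lam.re + Real.sin t * lam.im)
            + μ * (Real.cos t * ξsq.re + Real.sin t * ξsq.im) := by ring
      rw [e, hlam_part]
      have f1 : 0 ≤ ρ * ‖lam‖ * (Real.cos t - Real.sin (ε/2)) :=
        mul_nonneg (mul_pos hρ hlam_abs).le (sub_nonneg.2 hct)
      have f2 : 0 ≤ μ * (Real.cos t * ξsq.re + Real.sin t * ξsq.im) :=
        mul_nonneg hμ.le hQ_part
      linarith only [f1, f2]
    linarith [hproj]
  have hden_pos : 0 < ‖u‖ :=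
    lt_of_lt_of_le (mul_pos (mul_pos hρ hsε2) hlam_abs) hden
  -- piecewise bounds
  have b1 : ‖lam‖ * (‖u‖)⁻¹ ≤ (ρ * Real.sin (ε/2))⁻¹ := by
    have h1 : (‖u‖)⁻¹ ≤ (ρ * Real.sin (ε/2) * ‖lam‖)⁻¹ :=
      inv_anti₀ (mul_pos (mul_pos hρ hsε2) hlam_abs) hden
    calc ‖lam‖ * (‖u‖)⁻¹
        ≤ ‖lam‖ * (ρ * Real.sin (ε/2) * ‖lam‖)⁻¹ :=
          mul_le_mul_of_nonneg_left h1 (norm_nonneg _)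
      _ = (ρ * Real.sin (ε/2))⁻¹ := by
          field_simp
  have b2 : ‖ξn‖ * ‖ξn‖ / ‖ξsq‖ ≤ c0⁻¹ := by
    rw [div_le_iff₀ habsQ_pos]
    have h1 : c0 * (‖ξn‖ * ‖ξn‖) ≤ c0 * S2 := by
      have : ‖ξn‖ * ‖ξn‖ ≤ S2 := by
        rw [hS2def]
        have : ‖ξn‖ * ‖ξn‖ = ‖ξn‖ ^ 2 := by ring
        linarith only [this, hS'_pos]
      exact mul_le_mul_of_nonneg_left this hc0.le
    have h2 : c0 * (‖ξn‖ * ‖ξn‖) ≤ ‖ξsq‖ :=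
      le_trans h1 habsQ_lb
    calc ‖ξn‖ * ‖ξn‖
        = c0⁻¹ * (c0 * (‖ξn‖ * ‖ξn‖)) := by field_simp
      _ ≤ c0⁻¹ * ‖ξsq‖ :=
          mul_le_mul_of_nonneg_left h2 (inv_nonneg.mpr hc0.le)
  have b3 : ‖ξ' k‖ / ‖A‖ ≤ (Real.sqrt c0)⁻¹ := by
    rw [div_le_iff₀ hA_pos]
    have hA_lb : Real.sqrt c0 * ‖ξ' k‖ ≤ ‖A‖ := by
      have h1 : (Real.sqrt c0 * ‖ξ' k‖)^2 ≤ ‖A‖ ^ 2 := by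
        rw [hA_sq, mul_pow, Real.sq_sqrt hc0.le]
        calc c0 * ‖ξ' k‖^2 ≤ c0 * S' :=
              mul_le_mul_of_nonneg_left hkS' hc0.le
          _ ≤ ‖w‖ := habsw
      exact (pow_le_pow_iff_left₀ (mul_pos hsqc0 hk_pos).le hA_pos.le two_ne_zero).mp h1
    calc ‖ξ' k‖
        = (Real.sqrt c0)⁻¹ * (Real.sqrt c0 * ‖ξ' k‖) := by field_simp
      _ ≤ (Real.sqrt c0)⁻¹ * ‖A‖ :=
          mul_le_mul_of_nonneg_left hA_lb (inv_nonneg.mpr hsqc0.le)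
  -- assemble
  have hnorm : ‖(‖lam‖ : ℂ) * (Complex.I * ξn / A) * u⁻¹ * (-(ξn * ξ' k) / ξsq)‖
      = (‖lam‖ * (‖u‖)⁻¹)
        * (‖ξn‖ * ‖ξn‖ / ‖ξsq‖)
        * (‖ξ' k‖ / ‖A‖) := by
    simp only [norm_mul, norm_div, norm_inv, norm_neg,
      Complex.norm_I, Complex.norm_real]
    rw [norm_norm]
    field_simp
  rw [hnorm]
  have hC : (ρ * Real.sin (ε/2) * c0 * Real.sqrt c0)⁻¹
      = (ρ * Real.sin (ε/2))⁻¹ * c0⁻¹ * (Real.sqrt c0)⁻¹ := by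
    field_simp
  rw [hC]
  have t2 : 0 ≤ ‖ξn‖ * ‖ξn‖ / ‖ξsq‖ :=
    div_nonneg (mul_nonneg (norm_nonneg _) (norm_nonneg _)) (norm_nonneg _)
  have t3 : 0 ≤ ‖ξ' k‖ / ‖A‖ :=
    div_nonneg (norm_nonneg _) (norm_nonneg _)
  have h12 : (‖lam‖ * (‖u‖)⁻¹)
      * (‖ξn‖ * ‖ξn‖ / ‖ξsq‖)
      ≤ (ρ * Real.sin (ε/2))⁻¹ * c0⁻¹ :=
    mul_le_mul b1 b2 t2 (inv_nonneg.mpr (mul_pos hρ hsε2).le)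
  exact mul_le_mul h12 b3 t3
    (mul_nonneg (inv_nonneg.mpr (mul_pos hρ hsε2).le) (inv_nonneg.mpr hc0.le))
end
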